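/- Let r ≥ 3 be odd. For each prime q ≤ 2r set s(q) = max{s : q^s ≤ 2r}, h(q) = max{h : r ≤ 2^h·q^{s(q)} ≤ 2r}, l_q = 2^{h(q)}·q^{s(q)}, and let s'(q) be the exponent such that gcd(l_q, r) = q^{s'(q)}. Let N(r) = r·∏_{q ≤ 2r} q^{s(q)}. Then lcm_{q prime, q ≤ 2r} ( (l_q/gcd(l_q, r))·r ) = lcm_{q prime, q ≤ 2r} ( 2^{h(q)}·q^{s(q)−s'(q)}·r ) = N(r)/r. -/

import Mathlib

private lemma coprime_prod_dvd {t : Finset ℕ} {f : ℕ → ℕ} {n : ℕ}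
    (hc : (↑t : Set ℕ).Pairwise (Function.onFun Nat.Coprime f))
    (hd : ∀ i ∈ t, f i ∣ n) : ∏ i ∈ t, f i ∣ n := by
  induction t using Finset.cons_induction with
  | empty => simpa using one_dvd n
  | cons a s ha ih =>
    rw [Finset.prod_cons]
    have hcop : Nat.Coprime (f a) (∏ i ∈ s, f i) :=
      Nat.Coprime.prod_right fun i hi =>
        hc (by simp) (by simp [hi]) (fun h => ha (h ▸ hi))
    exact hcop.mul_dvd_of_dvd_of_dvd (hd a (by simp))
      (ih (hc.mono (by intro x hx; simp at hx ⊢; tauto))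
        (fun i hi => hd i (by simp [hi])))

theorem stmt_14 (r : ℕ) (hr : 3 ≤ r) (hodd : Odd r) (h : ℕ → ℕ)
    (hmax : ∀ q : ℕ, q.Prime → q ≤ 2 * r →
      (r ≤ 2 ^ h q * q ^ Nat.log q (2 * r) ∧
        2 ^ h q * q ^ Nat.log q (2 * r) ≤ 2 * r) ∧
      ∀ h' : ℕ,
        (r ≤ 2 ^ h' * q ^ Nat.log q (2 * r) ∧
          2 ^ h' * q ^ Nat.log q (2 * r) ≤ 2 * r) → h' ≤ h q) :
    ((Finset.range (2 * r + 1)).filter Nat.Prime).lcm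
        (fun q => (2 ^ h q * q ^ Nat.log q (2 * r)) /
            Nat.gcd (2 ^ h q * q ^ Nat.log q (2 * r)) r * r) =
      (r * ∏ q ∈ (Finset.range (2 * r + 1)).filter Nat.Prime,
          q ^ Nat.log q (2 * r)) / r := by
  have hr0 : 0 < r := by omega
  have h2r0 : (2 * r : ℕ) ≠ 0 := by omega
  set S : Finset ℕ := (Finset.range (2 * r + 1)).filter Nat.Prime with hS
  set s : ℕ → ℕ := fun q => Nat.log q (2 * r) with hs
  set l : ℕ → ℕ := fun q => 2 ^ h q * q ^ s q with hl
  have hmem : ∀ q ∈ S, q.Prime ∧ q ≤ 2 * r := by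
    intro q hq
    simp only [hS, Finset.mem_filter, Finset.mem_range] at hq
    exact ⟨hq.2, by omega⟩
  -- each term equals lcm (l q) r
  have hterm : ∀ q : ℕ, l q / Nat.gcd (l q) r * r = Nat.lcm (l q) r := by
    intro q
    have hg : Nat.gcd (l q) r ∣ l q := Nat.gcd_dvd_left _ _
    rw [Nat.lcm, mul_comm (l q) r, Nat.mul_div_assoc r hg, mul_comm]
  have h2S : 2 ∈ S := by
    simp only [hS, Finset.mem_filter, Finset.mem_range]
    exact ⟨by omega, Nat.prime_two⟩
  -- l q ∣ ∏
  have hldvd : ∀ q ∈ S, l q ∣ ∏ p ∈ S, p ^ s p := by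
    intro q hq
    obtain ⟨hqp, hqle⟩ := hmem q hq
    have hlq2r : l q ≤ 2 * r := ((hmax q hqp hqle).1).2
    by_cases hq2 : q = 2
    · subst hq2
      have hl2 : l 2 = 2 ^ (h 2 + s 2) := by rw [hl]; rw [pow_add]
      have hle : h 2 + s 2 ≤ s 2 := by
        have h2le : (2:ℕ) ^ (h 2 + s 2) ≤ 2 * r := hl2 ▸ hlq2r
        exact (Nat.le_log_iff_pow_le one_lt_two h2r0).mpr h2le
      have hd : l 2 ∣ 2 ^ s 2 := hl2 ▸ pow_dvd_pow 2 hle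
      exact dvd_trans hd (Finset.dvd_prod_of_mem _ h2S)
    · -- q odd prime
      have h2hq : (2:ℕ) ^ h q ≤ 2 * r := le_trans (Nat.le_mul_of_pos_right _ (pow_pos hqp.pos _)) hlq2r
      have hhq : h q ≤ s 2 :=
        (Nat.le_log_iff_pow_le one_lt_two h2r0).mpr h2hq
      have hd1 : (2:ℕ) ^ h q ∣ 2 ^ s 2 := pow_dvd_pow 2 hhq
      have hd2 : (2:ℕ) ^ s 2 * q ^ s q ∣ ∏ p ∈ S, p ^ s p := by
        have hcop : Nat.Coprime (2 ^ s 2) (q ^ s q) :=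
          Nat.Coprime.pow _ _ ((Nat.coprime_primes Nat.prime_two hqp).mpr (Ne.symm hq2))
        exact hcop.mul_dvd_of_dvd_of_dvd
          (Finset.dvd_prod_of_mem _ h2S) (Finset.dvd_prod_of_mem _ hq)
      exact dvd_trans (mul_dvd_mul hd1 dvd_rfl) hd2
  -- r ∣ ∏
  have hrdvd : r ∣ ∏ p ∈ S, p ^ s p := by
    conv_lhs => rw [← Nat.factorization_prod_pow_eq_self hr0.ne']
    rw [Nat.prod_factorization_eq_prod_primeFactors]
    have hsub : r.primeFactors ⊆ S := by
      intro p hp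
      have hpp := Nat.prime_of_mem_primeFactors hp
      have hpr := Nat.le_of_dvd hr0 (Nat.dvd_of_mem_primeFactors hp)
      simp only [hS, Finset.mem_filter, Finset.mem_range]
      exact ⟨by omega, hpp⟩
    calc ∏ p ∈ r.primeFactors, p ^ r.factorization p
        ∣ ∏ p ∈ r.primeFactors, p ^ s p := by
          apply Finset.prod_dvd_prod_of_dvd
          intro p hp
          apply pow_dvd_pow
          have hpp := Nat.prime_of_mem_primeFactors hp
          have : p ^ r.factorization p ≤ 2 * r :=
            le_trans (Nat.le_of_dvd hr0 (Nat.ordProj_dvd r p)) (by omega)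
          exact (Nat.le_log_iff_pow_le hpp.one_lt h2r0).mpr this
      _ ∣ ∏ p ∈ S, p ^ s p := Finset.prod_dvd_prod_of_subset _ _ _ hsub
  -- direction 1: lcm ∣ ∏
  have hdir1 : S.lcm (fun q => l q / Nat.gcd (l q) r * r) ∣ ∏ p ∈ S, p ^ s p := by
    apply Finset.lcm_dvd
    intro q hq
    rw [hterm q]
    exact Nat.lcm_dvd (hldvd q hq) hrdvd
  -- direction 2: ∏ ∣ lcm
  have hdir2 : (∏ p ∈ S, p ^ s p) ∣ S.lcm (fun q => l q / Nat.gcd (l q) r * r) := by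
    apply coprime_prod_dvd
    · intro p hp q hq hne
      have hpp := (hmem p (by exact_mod_cast hp)).1
      have hqp := (hmem q (by exact_mod_cast hq)).1
      exact Nat.Coprime.pow _ _ ((Nat.coprime_primes hpp hqp).mpr hne)
    · intro q hq
      have : q ^ s q ∣ l q := dvd_mul_left _ _
      refine dvd_trans (dvd_trans this ?_) (Finset.dvd_lcm hq)
      rw [hterm q]
      exact Nat.dvd_lcm_left _ _
  have hP := Nat.dvd_antisymm hdir1 hdir2
  rw [Nat.mul_div_cancel_left _ hr0]
  exact hP
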